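/- arXiv:1210.0189 — 2 statements merged into one kernel-verified Lean document; each statement's English description precedes it below -/
import Mathlib

section
/- For any ℚ-basis of V, the determinant of the Gram matrix of the bilinear form tr∘Φ with respect to that basis equals N_{E₀/ℚ}(−θ²)^m · q² for some nonzero rational number q, where N_{E₀/ℚ} denotes the field norm of E₀ over ℚ. -/
/-!
Since `ι ≠ id`, a sesquilinear form with `Φ x x = 0` for all `x` vanishes, so a reflexive form is
diagonalised by the usual induction; for the nondegenerate hermitian `Φ` the diagonal values
`c i = Φ (v i) (v i)` are nonzero elements of `E₀`. For a `ℚ`-basis `e` of `E₀` the vectors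
`e j • θ ^ ε • v i` form a `ℚ`-basis of `V` in which the Gram matrix of `tr ∘ Φ` is block diagonal.
As `Tr_{E/ℚ} (a θ) = 0` for `a ∈ E₀`, the block of `v i` splits again, into the Gram matrices of
`(x, y) ↦ 2 Tr_{E₀/ℚ} (x y c i)` and `(x, y) ↦ 2 Tr_{E₀/ℚ} (x y (-θ²) c i)`. The Gram determinant
of `(x, y) ↦ Tr (x y a)` is `N a` times the discriminant of `e`, so the two blocks together
contribute `N (-θ²)` times a square, and a change of basis multiplies the Gram determinant by the
square of a nonzero rational.
-/

open Module Algebra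

namespace LinearMap

variable {K V : Type*} [Field K] [AddCommGroup V] [Module K V] {ι : K →+* K}
  {B : V →ₗ[K] V →ₛₗ[ι] K}

theorem IsAlt.eq_zero_of_ne_id (hB : B.IsAlt) (hι : ι ≠ RingHom.id K) : B = 0 := by
  obtain ⟨a, ha⟩ : ∃ a, ι a ≠ a := by
    by_contra! h
    exact hι (RingHom.ext h)
  ext x y
  have hxay := hB.neg x (a • y)
  rw [map_smulₛₗ, map_smul, smul_apply, ← hB.neg x y, smul_eq_mul, smul_eq_mul] at hxay
  have : (ι a - a) * B x y = 0 := by linear_combination -hxay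
  simpa [sub_eq_zero, ha] using this

theorem exists_apply_self_ne_zero (hι : ι ≠ RingHom.id K) (hB : B ≠ 0) : ∃ x, B x x ≠ 0 := by
  by_contra! h
  exact hB (IsAlt.eq_zero_of_ne_id h hι)

theorem IsRefl.exists_isOrthoᵢ_basis [FiniteDimensional K V] (hι : ι ≠ RingHom.id K)
    (hB : B.IsRefl) : ∃ v : Basis (Fin (finrank K V)) K V, B.IsOrthoᵢ v := by
  suffices ∀ d, finrank K V = d → ∃ v : Basis (Fin d) K V, B.IsOrthoᵢ v from this _ rfl
  intro d hd
  induction d generalizing V with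
  | zero => exact ⟨basisOfFinrankZero hd, fun _ _ _ => map_zero _⟩
  | succ d ih =>
  obtain rfl | hB₀ := eq_or_ne B 0
  · exact ⟨(finBasis K V).reindex (finCongr hd), fun _ _ _ => rfl⟩
  obtain ⟨x, hx⟩ := exists_apply_self_ne_zero hι hB₀
  let W := ker (B.flip x)
  have hW : finrank K W = d := by
    have hsurj : range (B.flip x) = ⊤ :=
      range_eq_top.mpr fun c => ⟨(c / B x x) • x, by simp [div_mul_cancel₀ _ hx]⟩
    have := finrank_range_add_finrank_ker (B.flip x)
    rw [hsurj, finrank_top, finrank_self, hd] at this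
    change finrank K (ker (B.flip x)) = d
    omega
  obtain ⟨v', hv'⟩ := ih (hB.domRestrict W) hW
  let b := Basis.mkFinCons x v'
    (fun c y hy hc => by
      have : B (c • x + y) x = 0 := by rw [hc, map_zero, zero_apply]
      rw [map_add, map_smul, add_apply, smul_apply, show B y x = 0 from hy, add_zero,
        smul_eq_mul, mul_eq_zero] at this
      exact this.resolve_right hx)
    (fun z => ⟨-(B z x / B x x), by simp [W, div_mul_cancel₀ _ hx]⟩)
  refine ⟨b, ?_⟩
  rw [Basis.coe_mkFinCons]
  intro i j
  refine Fin.cases ?_ (fun i => ?_) i <;> refine Fin.cases ?_ (fun j => ?_) j <;> intro hij <;>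
    simp only [Function.onFun, Fin.cons_zero, Fin.cons_succ, Function.comp_apply]
  · exact (hij rfl).elim
  · exact hB _ _ (v' j).2
  · exact (v' i).2
  · exact hv' fun h => hij (congrArg Fin.succ h)

end LinearMap

theorem Algebra.det_of_trace_mul_mul {K L κ : Type*} [Field K] [CommRing L] [Algebra K L]
    [Fintype κ] [DecidableEq κ] (b : Basis κ K L) (a : L) :
    (Matrix.of fun i j => trace K L (b i * b j * a)).det = norm K a * discr K b := by
  have : (Matrix.of fun i j => trace K L (b i * b j * a)) =
      LinearMap.BilinForm.toMatrix b ((traceForm K L).compRight (lmul K L a)) := by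
    ext i j
    simp [LinearMap.BilinForm.toMatrix_apply, mul_assoc, mul_comm a]
  rw [this, LinearMap.BilinForm.toMatrix_compRight, Matrix.det_mul, ← traceMatrix_of_basis,
    ← discr_def, LinearMap.det_toMatrix, ← norm_apply, mul_comm]

theorem LinearMap.BilinForm.exists_det_toMatrix_eq_mul_sq {K V n o : Type*} [Field K]
    [AddCommGroup V] [Module K V] [Fintype n] [DecidableEq n] [Fintype o] [DecidableEq o]
    (B : LinearMap.BilinForm K V) (b : Basis n K V) (c : Basis o K V) :
    ∃ q : K, q ≠ 0 ∧ (toMatrix c B).det = (toMatrix b B).det * q ^ 2 := by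
  let c' := c.reindex (c.indexEquiv b)
  have hc' : (toMatrix c' B).det = (toMatrix c B).det := by
    rw [← Matrix.det_reindex_self (c.indexEquiv b)]
    congr 1
    ext i j
    simp [c', toMatrix_apply]
  refine ⟨b.det c', (b.isUnit_det c').ne_zero, ?_⟩
  rw [← hc', ← toMatrix_mul_basis_toMatrix b c', Matrix.det_mul, Matrix.det_mul,
    Matrix.det_transpose, Basis.det_apply]
  ring

namespace LinearMap

variable {K L V : Type*} [Field K] [Field L] [Algebra K L] [AddCommGroup V] [Module L V]
  [Module K V] [IsScalarTower K L V] {ι : L →+* L}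

noncomputable def traceBilin (hι : ∀ k : K, ι (algebraMap K L k) = algebraMap K L k)
    (Φ : V →ₗ[L] V →ₛₗ[ι] L) : LinearMap.BilinForm K V :=
  mk₂ K (fun x y => Algebra.trace K L (Φ x y))
    (fun x x' y => by rw [map_add, add_apply, map_add])
    (fun k x y => by
      rw [← algebraMap_smul L k x, map_smul, smul_apply, smul_eq_mul, ← Algebra.smul_def,
        map_smul])
    (fun x y y' => by rw [map_add, map_add])
    (fun k x y => by
      rw [← algebraMap_smul L k y, map_smulₛₗ, hι, smul_eq_mul, ← Algebra.smul_def, map_smul])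

variable (hι : ∀ k : K, ι (algebraMap K L k) = algebraMap K L k)

@[simp]
theorem traceBilin_apply (Φ : V →ₗ[L] V →ₛₗ[ι] L) (x y : V) :
    traceBilin hι Φ x y = Algebra.trace K L (Φ x y) := rfl

theorem toMatrix_traceBilin_smulTower {κ n : Type*} [Fintype κ] [DecidableEq κ] [Fintype n]
    [DecidableEq n] {Φ : V →ₗ[L] V →ₛₗ[ι] L} (f : Basis κ K L) {v : Basis n L V}
    (hv : Φ.IsOrthoᵢ v) :
    BilinForm.toMatrix (f.smulTower v) (traceBilin hι Φ) = Matrix.blockDiagonal fun i =>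
      Matrix.of fun p q => Algebra.trace K L (f p * ι (f q) * Φ (v i) (v i)) := by
  ext ⟨p, i⟩ ⟨q, k⟩
  simp only [BilinForm.toMatrix_apply, Matrix.blockDiagonal_apply, traceBilin_apply,
    Basis.smulTower_apply, map_smul, smul_apply, map_smulₛₗ, smul_eq_mul]
  split_ifs with h
  · subst h
    simp only [Matrix.of_apply]
    congr 1
    ring
  · rw [hv h, mul_zero, mul_zero, map_zero]

end LinearMap

section QuadraticExtension

variable {K E₀ E : Type*} [Field K] [Field E₀] [Field E] [Algebra K E₀] [Algebra K E]
  [Algebra E₀ E] [IsScalarTower K E₀ E] {θ : E} {θ0 : E₀} {bE : Basis (Fin 2) E₀ E}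
  {ι : E →+* E}

theorem exists_basis_eq_one_gen (hθ : θ ∉ Set.range (algebraMap E₀ E))
    (hgen : ∀ x : E, ∃ a b : E₀, x = algebraMap E₀ E a + algebraMap E₀ E b * θ) :
    ∃ bE : Basis (Fin 2) E₀ E, ⇑bE = ![1, θ] := by
  have hli : LinearIndependent E₀ ![(1 : E), θ] := by
    refine linearIndependent_fin2.mpr ⟨fun h => hθ ⟨0, by simpa using h.symm⟩, fun a ha => ?_⟩
    refine hθ ⟨a⁻¹, ?_⟩
    simp only [Matrix.cons_val_one, Matrix.cons_val_zero, Algebra.smul_def] at ha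
    rw [map_inv₀]
    exact inv_eq_of_mul_eq_one_right ha
  have hsp : ⊤ ≤ Submodule.span E₀ (Set.range ![(1 : E), θ]) := by
    rintro x -
    obtain ⟨a, b, rfl⟩ := hgen x
    rw [Matrix.range_cons, Matrix.range_cons, Matrix.range_empty, Set.union_empty,
      Set.singleton_union, Submodule.mem_span_pair]
    exact ⟨a, b, by simp [Algebra.smul_def]⟩
  exact ⟨Basis.mk hli hsp, Basis.coe_mk hli hsp⟩

theorem mem_range_algebraMap_of_conj_eq [NeZero (2 : E)]
    (hgen : ∀ x : E, ∃ a b : E₀, x = algebraMap E₀ E a + algebraMap E₀ E b * θ)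
    (hιfix : ∀ a, ι (algebraMap E₀ E a) = algebraMap E₀ E a) (hιθ : ι θ = -θ)
    {x : E} (hx : ι x = x) : x ∈ Set.range (algebraMap E₀ E) := by
  obtain ⟨a, b, rfl⟩ := hgen x
  rw [map_add, map_mul, hιfix, hιfix, hιθ] at hx
  have : algebraMap E₀ E b * θ = 0 := by
    have h2 : (2 : E) * (algebraMap E₀ E b * θ) = 0 := by linear_combination -hx
    exact (mul_eq_zero.mp h2).resolve_left two_ne_zero
  exact ⟨a, by rw [this, add_zero]⟩

theorem Algebra.trace_eq_zero_of_sq_eq_algebraMap (hθ0 : algebraMap E₀ E θ0 = θ ^ 2)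
    (hbE : ⇑bE = ![1, θ]) : trace E₀ E θ = 0 := by
  have hθ : bE.repr θ = Finsupp.single 1 1 := by
    rw [← bE.repr_self]; simp [hbE]
  have hθθ : bE.repr (θ * θ) = Finsupp.single 0 θ0 := by
    rw [← sq, ← hθ0, algebraMap_eq_smul_one, map_smul, show (1 : E) = bE 0 by simp [hbE],
      bE.repr_self, Finsupp.smul_single_one]
  rw [trace_eq_matrix_trace bE, Matrix.trace_fin_two, leftMulMatrix_eq_repr_mul,
    leftMulMatrix_eq_repr_mul]
  simp [hbE, hθ, hθθ]

variable [FiniteDimensional K E₀]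

theorem Algebra.trace_algebraMap_mul_eq_zero_of_sq_eq_algebraMap
    (hθ0 : algebraMap E₀ E θ0 = θ ^ 2) (hbE : ⇑bE = ![1, θ]) (a : E₀) :
    trace K E (algebraMap E₀ E a * θ) = 0 := by
  rw [← Algebra.smul_def, ← trace_trace_of_basis (Free.chooseBasis K E₀) bE, map_smul,
    trace_eq_zero_of_sq_eq_algebraMap hθ0 hbE, smul_zero, map_zero]

theorem Algebra.trace_algebraMap_eq_two_mul (bE : Basis (Fin 2) E₀ E) (a : E₀) :
    trace K E (algebraMap E₀ E a) = 2 * trace K E₀ a := by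
  rw [← trace_trace_of_basis (Free.chooseBasis K E₀) bE, trace_algebraMap_of_basis bE]
  simp [two_mul]

theorem Algebra.trace_algebraMap_mul_basis_mul_conj (hθ0 : algebraMap E₀ E θ0 = θ ^ 2)
    (hbE : ⇑bE = ![1, θ]) (hιθ : ι θ = -θ) (a : E₀) (ε δ : Fin 2) :
    trace K E (algebraMap E₀ E a * (bE ε * ι (bE δ))) =
      if ε = δ then 2 * trace K E₀ (![1, -θ0] ε * a) else 0 := by
  have hθa := trace_algebraMap_mul_eq_zero_of_sq_eq_algebraMap (K := K) hθ0 hbE a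
  fin_cases ε <;> fin_cases δ
  · simp [hbE, trace_algebraMap_eq_two_mul bE]
  · simp [hbE, hιθ, hθa]
  · simp [hbE, hθa]
  · have : algebraMap E₀ E a * (θ * ι θ) = algebraMap E₀ E (-θ0 * a) := by
      rw [hιθ, map_mul, map_neg, hθ0]; ring
    rw [hbE]
    show trace K E (algebraMap E₀ E a * (θ * ι θ)) = 2 * trace K E₀ (-θ0 * a)
    rw [this, trace_algebraMap_eq_two_mul bE]

variable {κ : Type*}

theorem Algebra.of_trace_smulTower_mul_conj_eq_blockDiagonal (hθ0 : algebraMap E₀ E θ0 = θ ^ 2)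
    (hbE : ⇑bE = ![1, θ]) (hιfix : ∀ a, ι (algebraMap E₀ E a) = algebraMap E₀ E a)
    (hιθ : ι θ = -θ) (e : Basis κ K E₀) (c : E₀) :
    Matrix.of (fun p q => trace K E (e.smulTower bE p * ι (e.smulTower bE q) * algebraMap E₀ E c)) =
      Matrix.blockDiagonal fun ε =>
        (2 : K) • Matrix.of fun j l => trace K E₀ (e j * e l * (![1, -θ0] ε * c)) := by
  ext ⟨j, ε⟩ ⟨l, δ⟩
  have : e.smulTower bE (j, ε) * ι (e.smulTower bE (l, δ)) * algebraMap E₀ E c =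
      algebraMap E₀ E (e j * e l * c) * (bE ε * ι (bE δ)) := by
    simp only [Basis.smulTower_apply, Algebra.smul_def, map_mul, hιfix]; ring
  rw [Matrix.of_apply, this, trace_algebraMap_mul_basis_mul_conj hθ0 hbE hιθ,
    Matrix.blockDiagonal_apply]
  split_ifs with h
  · subst h
    simp only [Matrix.smul_apply, Matrix.of_apply, smul_eq_mul]
    congr 2
    ring
  · rfl

theorem Algebra.det_of_trace_smulTower_mul_conj [Fintype κ] [DecidableEq κ]
    (hθ0 : algebraMap E₀ E θ0 = θ ^ 2) (hbE : ⇑bE = ![1, θ])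
    (hιfix : ∀ a, ι (algebraMap E₀ E a) = algebraMap E₀ E a) (hιθ : ι θ = -θ)
    (e : Basis κ K E₀) (c : E₀) :
    (Matrix.of fun p q =>
        trace K E (e.smulTower bE p * ι (e.smulTower bE q) * algebraMap E₀ E c)).det =
      norm K (-θ0) * (2 ^ Fintype.card κ * norm K c * discr K e) ^ 2 := by
  rw [of_trace_smulTower_mul_conj_eq_blockDiagonal hθ0 hbE hιfix hιθ, Matrix.det_blockDiagonal,
    Fin.prod_univ_two]
  simp only [Matrix.det_smul, det_of_trace_mul_mul, map_mul, Matrix.cons_val_zero, one_mul,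
    Matrix.cons_val_one, Matrix.cons_val_fin_one]
  ring

theorem LinearMap.det_toMatrix_traceBilin_smulTower_smulTower [Fintype κ] [DecidableEq κ]
    {n V : Type*} [Fintype n] [DecidableEq n] [AddCommGroup V] [Module E V] [Module K V]
    [IsScalarTower K E V] (hθ0 : algebraMap E₀ E θ0 = θ ^ 2) (hbE : ⇑bE = ![1, θ])
    (hιfix : ∀ a, ι (algebraMap E₀ E a) = algebraMap E₀ E a) (hιθ : ι θ = -θ)
    (hι : ∀ k : K, ι (algebraMap K E k) = algebraMap K E k) {Φ : V →ₗ[E] V →ₛₗ[ι] E}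
    (e : Basis κ K E₀) {v : Basis n E V} (hv : Φ.IsOrthoᵢ v) {c : n → E₀}
    (hc : ∀ i, algebraMap E₀ E (c i) = Φ (v i) (v i)) :
    (BilinForm.toMatrix ((e.smulTower bE).smulTower v) (traceBilin hι Φ)).det =
      norm K (-θ0) ^ Fintype.card n * (∏ i, 2 ^ Fintype.card κ * norm K (c i) * discr K e) ^ 2 := by
  rw [toMatrix_traceBilin_smulTower hι _ hv, Matrix.det_blockDiagonal]
  simp_rw [← hc, det_of_trace_smulTower_mul_conj hθ0 hbE hιfix hιθ]
  rw [Finset.prod_mul_distrib, Finset.prod_pow, Finset.prod_const, Finset.card_univ]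

theorem LinearMap.exists_isOrthoᵢ_basis_apply_self_eq_algebraMap [NeZero (2 : E)]
    {V : Type*} [AddCommGroup V] [Module E V] [FiniteDimensional E V]
    (hθ : θ ∉ Set.range (algebraMap E₀ E))
    (hgen : ∀ x : E, ∃ a b : E₀, x = algebraMap E₀ E a + algebraMap E₀ E b * θ)
    (hιfix : ∀ a, ι (algebraMap E₀ E a) = algebraMap E₀ E a) (hιθ : ι θ = -θ)
    {Φ : V →ₗ[E] V →ₛₗ[ι] E} (hΦ : ∀ x y, ι (Φ x y) = Φ y x) (hΦ' : Φ.SeparatingLeft) :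
    ∃ (v : Basis (Fin (finrank E V)) E V) (c : Fin (finrank E V) → E₀), Φ.IsOrthoᵢ v ∧
      (∀ i, c i ≠ 0) ∧ ∀ i, algebraMap E₀ E (c i) = Φ (v i) (v i) := by
  have hι : ι ≠ RingHom.id E := fun h =>
    hθ (mem_range_algebraMap_of_conj_eq hgen hιfix hιθ (by rw [h, RingHom.id_apply]))
  obtain ⟨v, hv⟩ := IsRefl.exists_isOrthoᵢ_basis hι fun x y h => by rw [← hΦ, h, map_zero]
  choose c hc using fun i => mem_range_algebraMap_of_conj_eq hgen hιfix hιθ (hΦ (v i) (v i))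
  refine ⟨v, c, hv, fun i h => ?_, hc⟩
  exact hv.not_isOrtho_basis_self_of_separatingLeft hΦ' i (by rw [← hc, h, map_zero])

theorem LinearMap.exists_det_of_trace_eq_norm_neg_pow_mul_sq [Algebra.IsSeparable K E₀]
    [NeZero (2 : K)] {V n : Type*} [AddCommGroup V] [Module E V] [Module K V]
    [IsScalarTower K E V] [FiniteDimensional E V] [Fintype n] [DecidableEq n]
    (hθ : θ ∉ Set.range (algebraMap E₀ E)) (hθ0 : algebraMap E₀ E θ0 = θ ^ 2)
    (hgen : ∀ x : E, ∃ a b : E₀, x = algebraMap E₀ E a + algebraMap E₀ E b * θ)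
    (hιfix : ∀ a, ι (algebraMap E₀ E a) = algebraMap E₀ E a) (hιθ : ι θ = -θ)
    {Φ : V →ₗ[E] V →ₛₗ[ι] E} (hΦ : ∀ x y, ι (Φ x y) = Φ y x) (hΦ' : Φ.SeparatingLeft)
    (b : Basis n K V) :
    ∃ q : K, q ≠ 0 ∧ (Matrix.of fun i j => Algebra.trace K E (Φ (b i) (b j))).det =
      norm K (-θ0) ^ finrank E V * q ^ 2 := by
  have : NeZero (2 : E) :=
    ⟨fun h => two_ne_zero ((algebraMap K E).injective (by rw [map_ofNat, h, map_zero]))⟩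
  obtain ⟨bE, hbE⟩ := exists_basis_eq_one_gen hθ hgen
  obtain ⟨v, c, hv, hc0, hc⟩ :=
    exists_isOrthoᵢ_basis_apply_self_eq_algebraMap hθ hgen hιfix hιθ hΦ hΦ'
  have hι (k : K) : ι (algebraMap K E k) = algebraMap K E k := by
    rw [IsScalarTower.algebraMap_apply K E₀ E, hιfix]
  let e := Free.chooseBasis K E₀
  obtain ⟨q, hq, hdet⟩ :=
    (traceBilin hι Φ).exists_det_toMatrix_eq_mul_sq ((e.smulTower bE).smulTower v) b
  refine ⟨q * ∏ i, 2 ^ Fintype.card (Free.ChooseBasisIndex K E₀) * norm K (c i) * discr K e,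
    mul_ne_zero hq <| Finset.prod_ne_zero_iff.mpr fun i _ => ?_, ?_⟩
  · exact mul_ne_zero (mul_ne_zero (pow_ne_zero _ two_ne_zero) (norm_ne_zero_iff.mpr (hc0 i)))
      (discr_not_zero_of_basis K e)
  · have hgram : (Matrix.of fun i j => Algebra.trace K E (Φ (b i) (b j))) =
        BilinForm.toMatrix b (traceBilin hι Φ) := by
      ext; simp [BilinForm.toMatrix_apply]
    rw [hgram, hdet, det_toMatrix_traceBilin_smulTower_smulTower hθ0 hbE hιfix hιθ hι e hv hc,
      Fintype.card_fin]
    ring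

end QuadraticExtension

theorem stmt9_general (E₀ E V : Type*) [Field E₀] [NumberField E₀] [Field E] [NumberField E]
    [Algebra E₀ E] [IsScalarTower ℚ E₀ E]
    (θ : E) (hθ : θ ∉ Set.range (algebraMap E₀ E))
    (θ0 : E₀) (hθ0 : algebraMap E₀ E θ0 = θ ^ 2)
    (hgen : ∀ x : E, ∃ a b : E₀, x = algebraMap E₀ E a + algebraMap E₀ E b * θ)
    (ι : E →+* E) (hιfix : ∀ a : E₀, ι (algebraMap E₀ E a) = algebraMap E₀ E a)
    (hιθ : ι θ = -θ)
    [AddCommGroup V] [Module E V] [Module ℚ V] [IsScalarTower ℚ E V]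
    [FiniteDimensional E V] (m : ℕ) (hm : Module.finrank E V = m)
    (Φ : V → V → E)
    (hΦadd1 : ∀ x x' y, Φ (x + x') y = Φ x y + Φ x' y)
    (hΦsmul1 : ∀ (e : E) (x y : V), Φ (e • x) y = e * Φ x y)
    (hΦadd2 : ∀ x y y', Φ x (y + y') = Φ x y + Φ x y')
    (hΦsmul2 : ∀ (e : E) (x y : V), Φ x (e • y) = ι e * Φ x y)
    (hΦherm : ∀ x y, Φ y x = ι (Φ x y))
    (hΦnondeg : ∀ x, (∀ y, Φ x y = 0) → x = 0)
    (κ : Type) [Fintype κ] [DecidableEq κ] (b : Module.Basis κ ℚ V) :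
    ∃ q : ℚ, q ≠ 0 ∧
      (Matrix.of fun i j : κ => Algebra.trace ℚ E (Φ (b i) (b j))).det =
        (Algebra.norm ℚ (-θ0)) ^ m * q ^ 2 := by
  subst hm
  exact LinearMap.exists_det_of_trace_eq_norm_neg_pow_mul_sq hθ hθ0 hgen hιfix hιθ
    (Φ := LinearMap.mk₂'ₛₗ _ _ Φ hΦadd1 hΦsmul1 hΦadd2 hΦsmul2) (fun x y => (hΦherm x y).symm)
    hΦnondeg b

/-- `E = E₀(θ)` a CM field with CM involution `ι`, `Φ` a nondegenerate
hermitian sesquilinear form on the `m`-dimensional `E`-vector space `V`.  For any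
`ℚ`-basis of `V`, the determinant of the Gram matrix of `tr∘Φ` equals
`N_{E₀/ℚ}(−θ²)^m · q²` for some nonzero rational `q`. -/
theorem stmt9 (E₀ E V : Type*) [Field E₀] [NumberField E₀] [Field E] [NumberField E]
    [Algebra E₀ E] [IsScalarTower ℚ E₀ E]
    (htotreal : ∀ (σ : E₀ →+* ℂ) (x : E₀), (σ x).im = 0)
    (s : ℕ) (hs : Module.finrank ℚ E₀ = s)
    (θ : E) (hθ : θ ∉ Set.range (algebraMap E₀ E))
    (θ0 : E₀) (hθ0 : algebraMap E₀ E θ0 = θ ^ 2)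
    (hθ0neg : ∀ σ : E₀ →+* ℝ, σ θ0 < 0)
    (hgen : ∀ x : E, ∃ a b : E₀, x = algebraMap E₀ E a + algebraMap E₀ E b * θ)
    (ι : E →+* E) (hιfix : ∀ a : E₀, ι (algebraMap E₀ E a) = algebraMap E₀ E a)
    (hιθ : ι θ = -θ)
    [AddCommGroup V] [Module E V] [Module ℚ V] [IsScalarTower ℚ E V]
    [FiniteDimensional E V] (m : ℕ) (hm : Module.finrank E V = m)
    (Φ : V → V → E)
    (hΦadd1 : ∀ x x' y, Φ (x + x') y = Φ x y + Φ x' y)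
    (hΦsmul1 : ∀ (e : E) (x y : V), Φ (e • x) y = e * Φ x y)
    (hΦadd2 : ∀ x y y', Φ x (y + y') = Φ x y + Φ x y')
    (hΦsmul2 : ∀ (e : E) (x y : V), Φ x (e • y) = ι e * Φ x y)
    (hΦherm : ∀ x y, Φ y x = ι (Φ x y))
    (hΦnondeg : ∀ x, (∀ y, Φ x y = 0) → x = 0)
    (κ : Type) [Fintype κ] [DecidableEq κ] (b : Module.Basis κ ℚ V) :
    ∃ q : ℚ, q ≠ 0 ∧
      (Matrix.of fun i j : κ => Algebra.trace ℚ E (Φ (b i) (b j))).det =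
        (Algebra.norm ℚ (-θ0)) ^ m * q ^ 2 :=
  stmt9_general E₀ E V θ hθ θ0 hθ0 hgen ι hιfix hιθ m hm Φ hΦadd1 hΦsmul1 hΦadd2 hΦsmul2 hΦherm
    hΦnondeg κ b
end

section
/- Suppose m ≥ 1, u₁,…,u_m is a basis of V over E orthogonal with respect to Φ, d_j := Φ(u_j,u_j) (each d_j is fixed by ι, so σ(d_j) ∈ ℝ for every embedding σ : E → ℂ), and there is a ring embedding σ₀ : E → ℂ such that σ₀(d₁) > 0, σ₀(d_j) < 0 for 2 ≤ j ≤ m, and σ(d_j) < 0 for every ring embedding σ : E → ℂ with σ ∉ {σ₀, conj∘σ₀} and every j. Then the real quadratic form ξ ↦ B_ℝ(ξ,ξ) on the (2ms)-dimensional ℝ-vector space V ⊗_ℚ ℝ has signature (2, 2ms − 2), i.e. it is equivalent over ℝ to a diagonal quadratic form with exactly 2 coefficients equal to +1 and 2ms − 2 coefficients equal to −1. -/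
/-!
Every embedding `σ : E → ℂ` sends `θ` to a nonzero purely imaginary number, hence
`σ ∘ ι = conj ∘ σ`. Let `z_{σ,j} : ℝ ⊗ V → ℂ` be the `ℝ`-linear extension of `x ↦ σ (x_j)`, where
`x_j` are the coordinates in the orthogonal basis. Since `Tr = ∑_σ σ`, we get
`B(ξ,ξ) = ∑_σ ∑_j σ(d_j) |z_{σ,j} ξ|²`. The terms of `σ` and `conj ∘ σ` agree, so it suffices to
sum over the `s` embeddings with `Im σ(θ) > 0`. The real and imaginary parts of the corresponding
`z_{σ,j}` are `2ms` independent coordinates (by nondegeneracy of the trace form), in which `B` is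
diagonal with coefficients `2σ(d_j)`: positive exactly for the representative of `{σ₀, conj ∘ σ₀}`
and `j = 1`.
-/

open scoped TensorProduct ComplexConjugate
open NumberField Matrix

theorem Complex.re_eq_zero_and_im_ne_zero_of_sq_eq_neg {w : ℂ} {r : ℝ} (hr : r < 0)
    (h : w ^ 2 = r) : w.re = 0 ∧ w.im ≠ 0 := by
  have hre : w.re ^ 2 - w.im ^ 2 = r := by simpa [sq] using congrArg Complex.re h
  have him : w.re * w.im = 0 := by
    have := congrArg Complex.im h
    simp only [sq, Complex.mul_im, Complex.ofReal_im] at this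
    linarith
  have him' : w.im ≠ 0 := by
    rintro h0
    nlinarith [sq_nonneg w.re, h0]
  exact ⟨(mul_eq_zero.mp him).resolve_right him', him'⟩

theorem Module.finrank_eq_two_of_forall_eq_add_mul {F K : Type*} [Field F] [Field K] [Algebra F K]
    {θ : K} (hθ : θ ∉ Set.range (algebraMap F K))
    (hgen : ∀ x : K, ∃ a b : F, x = algebraMap F K a + algebraMap F K b * θ) :
    Module.finrank F K = 2 := by
  have hind : LinearIndependent F ![1, θ] := by
    rw [LinearIndependent.pair_iff]
    intro a b hab
    have hb : b = 0 := by
      by_contra hb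
      refine hθ ⟨-a / b, ?_⟩
      rw [Algebra.smul_def, Algebra.smul_def, mul_one] at hab
      rw [map_div₀, map_neg, div_eq_iff (by simpa using hb)]
      linear_combination -hab
    subst hb
    simpa using hab
  have hspan : ⊤ ≤ Submodule.span F (Set.range ![1, θ]) := by
    rintro x -
    obtain ⟨a, b, rfl⟩ := hgen x
    rw [Algebra.algebraMap_eq_smul_one, ← Algebra.smul_def]
    exact Submodule.add_mem _ (Submodule.smul_mem _ _ (Submodule.subset_span ⟨0, rfl⟩))
      (Submodule.smul_mem _ _ (Submodule.subset_span ⟨1, rfl⟩))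
  rw [Module.finrank_eq_card_basis (Module.Basis.mk hind hspan), Fintype.card_fin]

theorem sesq_eq_sum_of_orthogonal {R V κ : Type*} [CommRing R] [AddCommGroup V] [Module R V]
    [Fintype κ] (ι : R →+* R) (Φ : V → V → R)
    (hΦadd1 : ∀ x x' y, Φ (x + x') y = Φ x y + Φ x' y)
    (hΦsmul1 : ∀ (e : R) (x y : V), Φ (e • x) y = e * Φ x y)
    (hΦadd2 : ∀ x y y', Φ x (y + y') = Φ x y + Φ x y')
    (hΦsmul2 : ∀ (e : R) (x y : V), Φ x (e • y) = ι e * Φ x y)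
    (u : Module.Basis κ R V) (horth : ∀ i j, i ≠ j → Φ (u i) (u j) = 0) (x y : V) :
    Φ x y = ∑ j, u.repr x j * ι (u.repr y j) * Φ (u j) (u j) := by
  let F : V →ₗ[R] V →ₛₗ[ι] R :=
    LinearMap.mk₂'ₛₗ (RingHom.id R) ι Φ hΦadd1 hΦsmul1 hΦadd2 hΦsmul2
  change F x y = _
  conv_lhs => rw [← u.sum_repr x, ← u.sum_repr y]
  simp only [map_sum, map_smul, map_smulₛₗ, LinearMap.sum_apply, LinearMap.smul_apply,
    smul_eq_mul, Finset.mul_sum]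
  refine Finset.sum_congr rfl fun j _ => ?_
  rw [Finset.sum_eq_single j (fun i _ hij => by simp [F, horth i j hij]) (by simp)]
  simp only [F, LinearMap.mk₂'ₛₗ_apply]
  ring

section CMInvolution

variable {E₀ E : Type*} [Field E₀] [Field E] [Algebra E₀ E] {θ : E} {θ0 : E₀}
  (htotreal : ∀ (σ : E₀ →+* ℂ) (x : E₀), (σ x).im = 0)
  (hθ0 : algebraMap E₀ E θ0 = θ ^ 2) (hθ0neg : ∀ σ : E₀ →+* ℝ, σ θ0 < 0)
include htotreal hθ0 hθ0neg

theorem re_apply_eq_zero_and_im_apply_ne_zero (σ : E →+* ℂ) :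
    (σ θ).re = 0 ∧ (σ θ).im ≠ 0 := by
  have hσ : ComplexEmbedding.IsReal (σ.comp (algebraMap E₀ E)) :=
    ComplexEmbedding.isReal_iff.mpr <|
      RingHom.ext fun a => Complex.conj_eq_iff_im.mpr (htotreal _ a)
  refine Complex.re_eq_zero_and_im_ne_zero_of_sq_eq_neg (hθ0neg hσ.embedding) ?_
  rw [hσ.coe_embedding_apply, RingHom.comp_apply, hθ0, map_pow]

theorem apply_involution_eq_conj
    (hgen : ∀ x : E, ∃ a b : E₀, x = algebraMap E₀ E a + algebraMap E₀ E b * θ)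
    (ι : E →+* E) (hιfix : ∀ a : E₀, ι (algebraMap E₀ E a) = algebraMap E₀ E a)
    (hιθ : ι θ = -θ) (σ : E →+* ℂ) (e : E) : σ (ι e) = conj (σ e) := by
  obtain ⟨a, b, rfl⟩ := hgen e
  have hre := (re_apply_eq_zero_and_im_apply_ne_zero htotreal hθ0 hθ0neg σ).1
  have hconjθ : conj (σ θ) = -σ θ := Complex.ext (by simp [hre]) (by simp)
  have hconjE₀ (a : E₀) : conj (σ (algebraMap E₀ E a)) = σ (algebraMap E₀ E a) :=
    Complex.conj_eq_iff_im.mpr (htotreal (σ.comp (algebraMap E₀ E)) a)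
  simp only [map_add, map_mul, hιfix, hιθ, map_neg, hconjE₀, hconjθ]

end CMInvolution

theorem Module.Basis.eq_zero_of_forall_sum_mul_embedding_eq_zero {K L F κ : Type*} [Field K]
    [Field L] [Algebra K L] [Field F] [Algebra K F] [IsAlgClosed F] [FiniteDimensional K L]
    [Algebra.IsSeparable K L] [Fintype κ] [DecidableEq κ] (b : Module.Basis κ K L) {c : κ → F}
    (h : ∀ σ : L →ₐ[K] F, ∑ i, c i * σ (b i) = 0) : c = 0 := by
  have hA : (Algebra.embeddingsMatrix K F b)ᵀ *ᵥ c = 0 := by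
    ext σ
    simpa [Matrix.mulVec, dotProduct, mul_comm] using h σ
  have hdet : ((Algebra.traceMatrix K b).map (algebraMap K F)).det ≠ 0 := by
    rw [← RingHom.mapMatrix_apply, ← RingHom.map_det, ← Algebra.discr_def]
    exact (algebraMap K F).injective.ne_iff' (map_zero _) |>.mpr
      (Algebra.discr_not_zero_of_basis K b)
  refine Matrix.eq_zero_of_mulVec_eq_zero hdet ?_
  rw [Algebra.traceMatrix_eq_embeddingsMatrix_mul_trans, ← Matrix.mulVec_mulVec, hA,
    Matrix.mulVec_zero]

section EmbeddingCoordinates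

variable {E V κ : Type*} [Field E] [CharZero E] [AddCommGroup V] [Module E V] [Module ℚ V]
  [IsScalarTower ℚ E V]

noncomputable def embCoord (u : Module.Basis κ E V) (σ : E →+* ℂ) (j : κ) : ℝ ⊗[ℚ] V →ₗ[ℝ] ℂ :=
  TensorProduct.AlgebraTensorModule.lift <| LinearMap.toSpanSingleton ℝ (V →ₗ[ℚ] ℂ)
    (σ.toRatAlgHom.toLinearMap ∘ₗ (u.coord j).restrictScalars ℚ)

variable (u : Module.Basis κ E V) (σ : E →+* ℂ) (j : κ)

@[simp]
theorem embCoord_tmul (c : ℝ) (x : V) : embCoord u σ j (c ⊗ₜ x) = c • σ (u.repr x j) := rfl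

theorem embCoord_conjugate (ξ : ℝ ⊗[ℚ] V) :
    embCoord u (ComplexEmbedding.conjugate σ) j ξ = conj (embCoord u σ j ξ) := by
  induction ξ using TensorProduct.induction_on with
  | zero => simp
  | tmul c x => simp [Complex.real_smul, ComplexEmbedding.conjugate_coe_eq]
  | add ξ ζ hξ hζ => simp only [map_add, hξ, hζ]

theorem embCoord_eq_sum_repr {η : Type*} [Fintype η] (b : Module.Basis η ℚ E) (ξ : ℝ ⊗[ℚ] V) :
    embCoord u σ j ξ = ∑ i, ((b.smulTower u).baseChange ℝ |>.repr ξ (i, j) : ℂ) * σ (b i) := by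
  induction ξ using TensorProduct.induction_on with
  | zero => simp
  | tmul c x =>
    simp only [embCoord_tmul, Module.Basis.baseChange_repr_tmul, Module.Basis.smulTower_repr,
      Complex.real_smul]
    conv_lhs => rw [← b.sum_repr (u.repr x j)]
    simp only [map_sum, Finset.mul_sum, Rat.smul_def, map_mul, map_ratCast, Complex.ofReal_mul,
      Complex.ofReal_ratCast]
    exact Finset.sum_congr rfl fun i _ => by ring
  | add ξ ζ hξ hζ =>
    simp only [map_add, hξ, hζ, Finsupp.add_apply, Complex.ofReal_add, add_mul,
      Finset.sum_add_distrib]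

theorem eq_zero_of_forall_embCoord_eq_zero [NumberField E] [Fintype κ] {ξ : ℝ ⊗[ℚ] V}
    (h : ∀ σ j, embCoord u σ j ξ = 0) : ξ = 0 := by
  classical
  let b := Module.finBasis ℚ E
  let bR := (b.smulTower u).baseChange ℝ
  suffices bR.repr ξ = 0 by simpa using congrArg bR.repr.symm this
  ext ⟨i, j⟩
  have hc := b.eq_zero_of_forall_sum_mul_embedding_eq_zero (F := ℂ)
    (c := fun i => (bR.repr ξ (i, j) : ℂ)) fun σ =>
      (embCoord_eq_sum_repr u σ.toRingHom j b ξ).symm.trans (h _ j)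
  simpa using congrFun hc i

end EmbeddingCoordinates

theorem NumberField.ratCast_trace_eq_sum_embeddings {E : Type*} [Field E] [NumberField E]
    (e : E) :
    ((Algebra.trace ℚ E e : ℚ) : ℂ) = ∑ σ : E →+* ℂ, σ e := by
  rw [← eq_ratCast (algebraMap ℚ ℂ), trace_eq_sum_embeddings ℂ]
  exact Fintype.sum_equiv (RingHom.equivRatAlgHom E ℂ).symm _ _ fun σ => rfl

section TraceForm

variable {E V κ : Type*} [Field E] [NumberField E] [AddCommGroup V] [Module E V] [Module ℚ V]
  [IsScalarTower ℚ E V] [Fintype κ] {u : Module.Basis κ E V} {ι : E →+* E} {Φ : V → V → E}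
  {d : κ → E} {B : (ℝ ⊗[ℚ] V) →ₗ[ℝ] (ℝ ⊗[ℚ] V) →ₗ[ℝ] ℝ}
  (hconj : ∀ (σ : E →+* ℂ) (e : E), σ (ι e) = conj (σ e))
  (hΦ : ∀ x y, Φ x y = ∑ j, u.repr x j * ι (u.repr y j) * d j)
  (hB : ∀ (c c' : ℝ) (x y : V),
    B (c ⊗ₜ[ℚ] x) (c' ⊗ₜ[ℚ] y) = c * c' * ((Algebra.trace ℚ E (Φ x y) : ℚ) : ℝ))
include hconj hΦ hB

theorem ofReal_apply_eq_sum_embCoord (ξ ζ : ℝ ⊗[ℚ] V) :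
    (B ξ ζ : ℂ) =
      ∑ σ : E →+* ℂ, ∑ j, embCoord u σ j ξ * conj (embCoord u σ j ζ) * σ (d j) := by
  induction ξ using TensorProduct.induction_on with
  | zero => simp
  | add ξ₁ ξ₂ h₁ h₂ =>
    simp only [map_add, LinearMap.add_apply, Complex.ofReal_add, h₁, h₂, add_mul,
      Finset.sum_add_distrib]
  | tmul c x =>
    induction ζ using TensorProduct.induction_on with
    | zero => simp
    | add ζ₁ ζ₂ h₁ h₂ =>
      simp only [map_add, Complex.ofReal_add, h₁, h₂, mul_add, add_mul, Finset.sum_add_distrib]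
    | tmul c' y =>
      rw [hB, Complex.ofReal_mul, Complex.ofReal_mul, Complex.ofReal_ratCast,
        ratCast_trace_eq_sum_embeddings, hΦ, Finset.mul_sum]
      refine Finset.sum_congr rfl fun σ _ => ?_
      rw [map_sum, Finset.mul_sum]
      refine Finset.sum_congr rfl fun j _ => ?_
      simp only [embCoord_tmul, Complex.real_smul, map_mul, hconj, Complex.conj_ofReal]
      ring

theorem apply_self_eq_sum_normSq (hreal : ∀ (σ : E →+* ℂ) j, (σ (d j)).im = 0)
    (ξ : ℝ ⊗[ℚ] V) :
    B ξ ξ = ∑ σ : E →+* ℂ, ∑ j, (σ (d j)).re * Complex.normSq (embCoord u σ j ξ) := by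
  apply Complex.ofReal_injective
  rw [ofReal_apply_eq_sum_embCoord hconj hΦ hB]
  push_cast
  refine Finset.sum_congr rfl fun σ _ => Finset.sum_congr rfl fun j _ => ?_
  rw [Complex.mul_conj, ← Complex.re_add_im (σ (d j)), hreal]
  simp only [Complex.ofReal_zero, zero_mul, add_zero, Complex.ofReal_re]
  ring

end TraceForm

namespace Function.Involutive

variable {α : Type*} {c : α → α} {P : α → Prop}

def subtypeNotEquiv (hc : Involutive c) (hP : ∀ a, P (c a) ↔ ¬P a) :
    {a // ¬P a} ≃ {a // P a} :=
  (hc.toPerm c).subtypeEquiv fun a => (hP a).symm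

variable [Fintype α] [DecidablePred P]

theorem sum_eq_sum_subtype_add {M : Type*} [AddCommMonoid M] (hc : Involutive c)
    (hP : ∀ a, P (c a) ↔ ¬P a) (f : α → M) : ∑ a, f a = ∑ a : {a // P a}, (f a + f (c a)) := by
  rw [← Fintype.sum_subtype_add_sum_subtype P f, Finset.sum_add_distrib]
  congr 1
  exact Fintype.sum_equiv (hc.subtypeNotEquiv hP) _ _ fun a => by
    rw [show ((hc.subtypeNotEquiv hP a : {a // P a}) : α) = c a from rfl, hc]

theorem two_mul_card_subtype (hc : Involutive c) (hP : ∀ a, P (c a) ↔ ¬P a) :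
    2 * Fintype.card {a // P a} = Fintype.card α := by
  have h := Fintype.card_subtype_compl P
  have hle := Fintype.card_subtype_le P
  rw [Fintype.card_congr (hc.subtypeNotEquiv hP)] at h
  omega

end Function.Involutive

theorem card_filter_eq_or_eq_eq_one {α : Type*} [Fintype α] [DecidableEq α] {c : α → α}
    {P : α → Prop} [DecidablePred P] (hP : ∀ a, P (c a) ↔ ¬P a) (a₀ : α) :
    (Finset.univ.filter fun a : {a // P a} => a.1 = a₀ ∨ a.1 = c a₀).card = 1 := by
  rw [Finset.card_eq_one]
  by_cases h : P a₀
  · refine ⟨⟨a₀, h⟩, Finset.eq_singleton_iff_unique_mem.mpr ⟨by simp, ?_⟩⟩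
    rintro ⟨a, ha⟩ hmem
    rcases (Finset.mem_filter.mp hmem).2 with rfl | rfl
    · rfl
    · exact absurd h ((hP a₀).mp ha)
  · refine ⟨⟨c a₀, (hP a₀).mpr h⟩, Finset.eq_singleton_iff_unique_mem.mpr ⟨by simp, ?_⟩⟩
    rintro ⟨a, ha⟩ hmem
    rcases (Finset.mem_filter.mp hmem).2 with rfl | rfl
    · exact absurd ha h
    · rfl

theorem Fintype.exists_equiv_fin_lt_iff {I : Type*} [Fintype I] (P : I → Prop) [DecidablePred P]
    {p n : ℕ} (hp : Fintype.card {i // P i} = p) (hn : Fintype.card I = n) :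
    ∃ e : I ≃ Fin n, ∀ i, (e i : ℕ) < p ↔ P i := by
  have hq : Fintype.card {i // ¬P i} = n - p := by rw [Fintype.card_subtype_compl, hp, hn]
  have hpn : p ≤ n := hp ▸ hn ▸ Fintype.card_subtype_le P
  let e : I ≃ Fin n := (Equiv.sumCompl P).symm.trans <|
    ((Fintype.equivFinOfCardEq hp).sumCongr (Fintype.equivFinOfCardEq hq)).trans <|
      finSumFinEquiv.trans (finCongr (by omega))
  refine ⟨e, fun i => ?_⟩
  by_cases hi : P i
  · simp [e, Equiv.sumCompl_symm_apply_of_pos hi, hi]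
  · simp [e, Equiv.sumCompl_symm_apply_of_neg hi, hi]

theorem exists_linearEquiv_fin_signature {M I : Type*} [AddCommGroup M] [Module ℝ M] [Fintype I]
    (L : M ≃ₗ[ℝ] (I → ℝ)) {c : I → ℝ} (hc : ∀ i, c i ≠ 0) {p n : ℕ}
    (hp : Fintype.card {i // 0 < c i} = p) (hn : Fintype.card I = n) :
    ∃ g : M ≃ₗ[ℝ] (Fin n → ℝ), ∀ x,
      ∑ i, c i * L x i ^ 2 = ∑ i : Fin n, (if (i : ℕ) < p then (1 : ℝ) else -1) * g x i ^ 2 := by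
  obtain ⟨e, he⟩ := Fintype.exists_equiv_fin_lt_iff _ hp hn
  have hw (i : I) : √|c i| ≠ 0 := Real.sqrt_ne_zero'.mpr (abs_pos.mpr (hc i))
  refine ⟨(L.trans (LinearEquiv.piCongrRight fun i => .smulOfNeZero ℝ ℝ _ (hw i))).trans
    (LinearEquiv.funCongrLeft ℝ ℝ e.symm), fun x => ?_⟩
  refine Fintype.sum_equiv e _ _ fun i => ?_
  simp only [LinearEquiv.trans_apply, LinearEquiv.funCongrLeft_apply, LinearMap.funLeft_apply,
    Equiv.symm_apply_apply, LinearEquiv.piCongrRight_apply, LinearEquiv.smulOfNeZero_apply,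
    smul_eq_mul, he, mul_pow, Real.sq_sqrt (abs_nonneg _)]
  split_ifs with h
  · rw [abs_of_pos h]; ring
  · rw [abs_of_neg (lt_of_le_of_ne (not_lt.mp h) (hc i))]; ring

theorem conjugate_im_pos_iff {E : Type*} [Field E] {θ : E} (hθ : ∀ σ : E →+* ℂ, (σ θ).im ≠ 0)
    (σ : E →+* ℂ) :
    0 < (ComplexEmbedding.conjugate σ θ).im ↔ ¬0 < (σ θ).im := by
  rw [ComplexEmbedding.conjugate_coe_eq, Complex.conj_im, neg_pos, not_lt]
  exact ⟨le_of_lt, fun h => lt_of_le_of_ne h (hθ σ)⟩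

section UpperEmbeddings

variable {E V κ : Type*} [Field E] [CharZero E] [AddCommGroup V] [Module E V] [Module ℚ V]
  [IsScalarTower ℚ E V] {θ : E}

variable (θ) in
noncomputable def upperCoords (u : Module.Basis κ E V) :
    ℝ ⊗[ℚ] V →ₗ[ℝ] ({σ : E →+* ℂ // 0 < (σ θ).im} × κ × Fin 2 → ℝ) :=
  LinearMap.pi fun p => ![Complex.reLm, Complex.imLm] p.2.2 ∘ₗ embCoord u p.1 p.2.1

theorem normSq_embCoord_eq_sum_upperCoords (u : Module.Basis κ E V) (ξ : ℝ ⊗[ℚ] V)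
    (σ : {σ : E →+* ℂ // 0 < (σ θ).im}) (j : κ) :
    Complex.normSq (embCoord u σ j ξ) = ∑ k, upperCoords θ u ξ (σ, j, k) ^ 2 := by
  simp [upperCoords, Fin.sum_univ_two, Complex.normSq_apply, sq]

variable [NumberField E] (hθ : ∀ σ : E →+* ℂ, (σ θ).im ≠ 0)
include hθ

theorem two_mul_card_im_pos :
    2 * Fintype.card {σ : E →+* ℂ // 0 < (σ θ).im} = Module.finrank ℚ E := by
  rw [(ComplexEmbedding.involutive_conjugate E).two_mul_card_subtype
    (P := fun σ => 0 < (σ θ).im) (conjugate_im_pos_iff hθ), Embeddings.card]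

theorem upperCoords_injective [Fintype κ] (u : Module.Basis κ E V) :
    Function.Injective (upperCoords θ u) := by
  rw [← LinearMap.ker_eq_bot, LinearMap.ker_eq_bot']
  intro ξ hξ
  have hupper (σ : {σ : E →+* ℂ // 0 < (σ θ).im}) (j : κ) : embCoord u σ j ξ = 0 :=
    Complex.normSq_eq_zero.mp <| by simp [normSq_embCoord_eq_sum_upperCoords, hξ]
  refine eq_zero_of_forall_embCoord_eq_zero u fun σ j => ?_
  by_cases hσ : 0 < (σ θ).im
  · exact hupper ⟨σ, hσ⟩ j
  · rw [← ComplexEmbedding.involutive_conjugate E σ, embCoord_conjugate,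
      hupper ⟨_, (conjugate_im_pos_iff hθ σ).mpr hσ⟩ j, map_zero]

theorem sum_embeddings_eq_sum_upperCoords [Fintype κ] (u : Module.Basis κ E V)
    (w : (E →+* ℂ) → κ → ℝ) (hw : ∀ σ j, w (ComplexEmbedding.conjugate σ) j = w σ j)
    (ξ : ℝ ⊗[ℚ] V) :
    ∑ σ : E →+* ℂ, ∑ j, w σ j * Complex.normSq (embCoord u σ j ξ) =
      ∑ p, 2 * w p.1 p.2.1 * upperCoords θ u ξ p ^ 2 := by
  classical
  rw [(ComplexEmbedding.involutive_conjugate E).sum_eq_sum_subtype_add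
    (P := fun σ => 0 < (σ θ).im) (conjugate_im_pos_iff hθ), Fintype.sum_prod_type]
  refine Finset.sum_congr rfl fun σ _ => ?_
  rw [Fintype.sum_prod_type, ← Finset.sum_add_distrib]
  refine Finset.sum_congr rfl fun j _ => ?_
  rw [hw, embCoord_conjugate, Complex.normSq_conj, normSq_embCoord_eq_sum_upperCoords,
    Finset.mul_sum, ← Finset.sum_add_distrib]
  exact Finset.sum_congr rfl fun k _ => by ring

noncomputable def upperCoordsEquiv [Fintype κ] (u : Module.Basis κ E V) :
    ℝ ⊗[ℚ] V ≃ₗ[ℝ] ({σ : E →+* ℂ // 0 < (σ θ).im} × κ × Fin 2 → ℝ) :=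
  haveI : Module.Finite E V := .of_basis u
  haveI : Module.Finite ℚ V := .trans E V
  LinearMap.linearEquivOfInjective _ (upperCoords_injective hθ u) <| by
    rw [Module.finrank_baseChange, ← Module.finrank_mul_finrank ℚ E V, ← two_mul_card_im_pos hθ,
      Module.finrank_eq_card_basis u, Module.finrank_fintype_fun_eq_card]
    simp only [Fintype.card_prod, Fintype.card_fin]
    ring

theorem upperCoordsEquiv_apply [Fintype κ] (u : Module.Basis κ E V) (ξ : ℝ ⊗[ℚ] V) :
    upperCoordsEquiv hθ u ξ = upperCoords θ u ξ := rfl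

end UpperEmbeddings

section SignPattern

variable {E : Type*} [Field E] {m : ℕ} {d : Fin m → E} {σ₀ : E →+* ℂ}

theorem re_apply_pos_iff_and_ne_zero (hσ₀1 : ∀ j : Fin m, (j : ℕ) = 0 → 0 < (σ₀ (d j)).re)
    (hσ₀neg : ∀ j : Fin m, 1 ≤ (j : ℕ) → (σ₀ (d j)).re < 0)
    (hother : ∀ σ : E →+* ℂ, σ ≠ σ₀ → σ ≠ (starRingEnd ℂ).comp σ₀ →
      ∀ j : Fin m, (σ (d j)).re < 0) (σ : E →+* ℂ) (j : Fin m) :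
    (0 < (σ (d j)).re ↔ (σ = σ₀ ∨ σ = ComplexEmbedding.conjugate σ₀) ∧ (j : ℕ) = 0) ∧
      (σ (d j)).re ≠ 0 := by
  by_cases hσ : σ = σ₀ ∨ σ = ComplexEmbedding.conjugate σ₀
  · have hre : (σ (d j)).re = (σ₀ (d j)).re := by
      rcases hσ with rfl | rfl
      · rfl
      · simp [ComplexEmbedding.conjugate_coe_eq]
    rw [hre]
    by_cases hj : (j : ℕ) = 0
    · have h := hσ₀1 j hj
      simp [hσ, hj, h, h.ne']
    · have h := hσ₀neg j (by omega)
      simp [hσ, hj, h.ne, h.not_gt]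
  · push Not at hσ
    have h := hother σ hσ.1 hσ.2 j
    simp [hσ, h.ne, h.not_gt]

theorem card_two_mul_re_pos_eq_two {θ : E} (hθ : ∀ σ : E →+* ℂ, (σ θ).im ≠ 0) (hm : 1 ≤ m)
    (hσ₀1 : ∀ j : Fin m, (j : ℕ) = 0 → 0 < (σ₀ (d j)).re)
    (hσ₀neg : ∀ j : Fin m, 1 ≤ (j : ℕ) → (σ₀ (d j)).re < 0)
    (hother : ∀ σ : E →+* ℂ, σ ≠ σ₀ → σ ≠ (starRingEnd ℂ).comp σ₀ →
      ∀ j : Fin m, (σ (d j)).re < 0) [Fintype (E →+* ℂ)] :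
    Fintype.card {p : {σ : E →+* ℂ // 0 < (σ θ).im} × Fin m × Fin 2 //
      0 < 2 * (p.1.1 (d p.2.1)).re} = 2 := by
  classical
  have hfilter : (Finset.univ.filter fun p : {σ : E →+* ℂ // 0 < (σ θ).im} × Fin m × Fin 2 =>
      0 < 2 * (p.1.1 (d p.2.1)).re) =
      (Finset.univ.filter fun σ : {σ : E →+* ℂ // 0 < (σ θ).im} =>
        σ.1 = σ₀ ∨ σ.1 = ComplexEmbedding.conjugate σ₀) ×ˢ
      ({⟨0, hm⟩} ×ˢ Finset.univ) := by
    ext ⟨σ, j, k⟩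
    simp [(re_apply_pos_iff_and_ne_zero hσ₀1 hσ₀neg hother σ j).1, Fin.ext_iff, eq_comm]
  rw [Fintype.card_subtype, hfilter, Finset.card_product, Finset.card_product,
    card_filter_eq_or_eq_eq_one (conjugate_im_pos_iff hθ)]
  simp

end SignPattern

theorem stmt11_general (E₀ E V : Type*) [Field E₀] [NumberField E₀] [Field E] [NumberField E]
    [Algebra E₀ E] [IsScalarTower ℚ E₀ E]
    (htotreal : ∀ (σ : E₀ →+* ℂ) (x : E₀), (σ x).im = 0)
    (s : ℕ) (hs : Module.finrank ℚ E₀ = s)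
    (θ : E) (hθ : θ ∉ Set.range (algebraMap E₀ E))
    (θ0 : E₀) (hθ0 : algebraMap E₀ E θ0 = θ ^ 2)
    (hθ0neg : ∀ σ : E₀ →+* ℝ, σ θ0 < 0)
    (hgen : ∀ x : E, ∃ a b : E₀, x = algebraMap E₀ E a + algebraMap E₀ E b * θ)
    (ι : E →+* E) (hιfix : ∀ a : E₀, ι (algebraMap E₀ E a) = algebraMap E₀ E a)
    (hιθ : ι θ = -θ)
    [AddCommGroup V] [Module E V] [Module ℚ V] [IsScalarTower ℚ E V]
    (Φ : V → V → E)
    (hΦadd1 : ∀ x x' y, Φ (x + x') y = Φ x y + Φ x' y)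
    (hΦsmul1 : ∀ (e : E) (x y : V), Φ (e • x) y = e * Φ x y)
    (hΦadd2 : ∀ x y y', Φ x (y + y') = Φ x y + Φ x y')
    (hΦsmul2 : ∀ (e : E) (x y : V), Φ x (e • y) = ι e * Φ x y)
    (m : ℕ) (hm : 1 ≤ m) (u : Module.Basis (Fin m) E V)
    (horth : ∀ i j : Fin m, i ≠ j → Φ (u i) (u j) = 0)
    (d : Fin m → E) (hd : ∀ j, d j = Φ (u j) (u j))
    (σ₀ : E →+* ℂ)
    (hreal : ∀ (σ : E →+* ℂ) (j : Fin m), (σ (d j)).im = 0)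
    (hσ₀1 : ∀ j : Fin m, (j : ℕ) = 0 → 0 < (σ₀ (d j)).re)
    (hσ₀neg : ∀ j : Fin m, 1 ≤ (j : ℕ) → (σ₀ (d j)).re < 0)
    (hother : ∀ σ : E →+* ℂ, σ ≠ σ₀ → σ ≠ (starRingEnd ℂ).comp σ₀ →
      ∀ j : Fin m, (σ (d j)).re < 0)
    (B : (ℝ ⊗[ℚ] V) →ₗ[ℝ] (ℝ ⊗[ℚ] V) →ₗ[ℝ] ℝ)
    (hB : ∀ (c c' : ℝ) (x y : V),
      B (c ⊗ₜ[ℚ] x) (c' ⊗ₜ[ℚ] y) = c * c' * ((Algebra.trace ℚ E (Φ x y) : ℚ) : ℝ)) :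
    ∃ g : (ℝ ⊗[ℚ] V) ≃ₗ[ℝ] (Fin (2 * m * s) → ℝ), ∀ ξ : ℝ ⊗[ℚ] V,
      B ξ ξ = ∑ i : Fin (2 * m * s),
        (if (i : ℕ) < 2 then (1 : ℝ) else -1) * (g ξ i) ^ 2 := by
  classical
  have hθim (σ : E →+* ℂ) : (σ θ).im ≠ 0 :=
    (re_apply_eq_zero_and_im_apply_ne_zero htotreal hθ0 hθ0neg σ).2
  have hΦ (x y : V) : Φ x y = ∑ j, u.repr x j * ι (u.repr y j) * d j := by
    simpa only [hd] using
      sesq_eq_sum_of_orthogonal ι Φ hΦadd1 hΦsmul1 hΦadd2 hΦsmul2 u horth x y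
  have hQ := apply_self_eq_sum_normSq
    (apply_involution_eq_conj htotreal hθ0 hθ0neg hgen ι hιfix hιθ) hΦ hB hreal
  have hcard : Fintype.card {σ : E →+* ℂ // 0 < (σ θ).im} = s := by
    have h := two_mul_card_im_pos hθim
    rw [← Module.finrank_mul_finrank ℚ E₀ E, hs,
      Module.finrank_eq_two_of_forall_eq_add_mul hθ hgen] at h
    omega
  obtain ⟨g, hg⟩ := exists_linearEquiv_fin_signature (upperCoordsEquiv hθim u)
    (fun p => mul_ne_zero two_ne_zero (re_apply_pos_iff_and_ne_zero hσ₀1 hσ₀neg hother _ _).2)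
    (card_two_mul_re_pos_eq_two hθim hm hσ₀1 hσ₀neg hother) (n := 2 * m * s)
    (by simp [hcard]; ring)
  refine ⟨g, fun ξ => ?_⟩
  rw [← hg, hQ, sum_embeddings_eq_sum_upperCoords hθim u _
    fun σ j => by simp [ComplexEmbedding.conjugate_coe_eq]]
  simp [upperCoordsEquiv_apply, mul_assoc]

/-- `E = E₀(θ)` a CM field of degree `2s` with CM involution `ι`,
`Φ` a nondegenerate hermitian sesquilinear form on the `m`-dimensional (`m ≥ 1`)
`E`-vector space `V` with a `Φ`-orthogonal basis `u₁,…,u_m`, `d_j = Φ(u_j,u_j)` fixed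
by `ι` (so each `σ(d_j)` is real), and `σ₀ : E → ℂ` an embedding with `σ₀(d₁) > 0`,
`σ₀(d_j) < 0` for `2 ≤ j ≤ m`, and `σ(d_j) < 0` for all `σ ∉ {σ₀, conj∘σ₀}` and all
`j`.  Then the real quadratic form `ξ ↦ B(ξ,ξ)` on the `(2ms)`-dimensional space
`V ⊗_ℚ ℝ` (with `B` the `ℝ`-bilinear extension of `tr∘Φ`) has signature
`(2, 2ms − 2)`: it is equivalent over `ℝ` to a diagonal quadratic form with exactly
`2` coefficients `+1` and `2ms − 2` coefficients `−1`. -/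
theorem stmt11 (E₀ E V : Type*) [Field E₀] [NumberField E₀] [Field E] [NumberField E]
    [Algebra E₀ E] [IsScalarTower ℚ E₀ E]
    (htotreal : ∀ (σ : E₀ →+* ℂ) (x : E₀), (σ x).im = 0)
    (s : ℕ) (hs : Module.finrank ℚ E₀ = s)
    (θ : E) (hθ : θ ∉ Set.range (algebraMap E₀ E))
    (θ0 : E₀) (hθ0 : algebraMap E₀ E θ0 = θ ^ 2)
    (hθ0neg : ∀ σ : E₀ →+* ℝ, σ θ0 < 0)
    (hgen : ∀ x : E, ∃ a b : E₀, x = algebraMap E₀ E a + algebraMap E₀ E b * θ)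
    (ι : E →+* E) (hιfix : ∀ a : E₀, ι (algebraMap E₀ E a) = algebraMap E₀ E a)
    (hιθ : ι θ = -θ)
    [AddCommGroup V] [Module E V] [Module ℚ V] [IsScalarTower ℚ E V]
    (Φ : V → V → E)
    (hΦadd1 : ∀ x x' y, Φ (x + x') y = Φ x y + Φ x' y)
    (hΦsmul1 : ∀ (e : E) (x y : V), Φ (e • x) y = e * Φ x y)
    (hΦadd2 : ∀ x y y', Φ x (y + y') = Φ x y + Φ x y')
    (hΦsmul2 : ∀ (e : E) (x y : V), Φ x (e • y) = ι e * Φ x y)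
    (hΦherm : ∀ x y, Φ y x = ι (Φ x y))
    (hΦnondeg : ∀ x, (∀ y, Φ x y = 0) → x = 0)
    (m : ℕ) (hm : 1 ≤ m) (u : Module.Basis (Fin m) E V)
    (horth : ∀ i j : Fin m, i ≠ j → Φ (u i) (u j) = 0)
    (d : Fin m → E) (hd : ∀ j, d j = Φ (u j) (u j))
    (hdfix : ∀ j, ι (d j) = d j)
    (σ₀ : E →+* ℂ)
    (hreal : ∀ (σ : E →+* ℂ) (j : Fin m), (σ (d j)).im = 0)
    (hσ₀1 : ∀ j : Fin m, (j : ℕ) = 0 → 0 < (σ₀ (d j)).re)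
    (hσ₀neg : ∀ j : Fin m, 1 ≤ (j : ℕ) → (σ₀ (d j)).re < 0)
    (hother : ∀ σ : E →+* ℂ, σ ≠ σ₀ → σ ≠ (starRingEnd ℂ).comp σ₀ →
      ∀ j : Fin m, (σ (d j)).re < 0)
    (B : (ℝ ⊗[ℚ] V) →ₗ[ℝ] (ℝ ⊗[ℚ] V) →ₗ[ℝ] ℝ)
    (hB : ∀ (c c' : ℝ) (x y : V),
      B (c ⊗ₜ[ℚ] x) (c' ⊗ₜ[ℚ] y) = c * c' * ((Algebra.trace ℚ E (Φ x y) : ℚ) : ℝ)) :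
    ∃ g : (ℝ ⊗[ℚ] V) ≃ₗ[ℝ] (Fin (2 * m * s) → ℝ), ∀ ξ : ℝ ⊗[ℚ] V,
      B ξ ξ = ∑ i : Fin (2 * m * s),
        (if (i : ℕ) < 2 then (1 : ℝ) else -1) * (g ξ i) ^ 2 :=
  stmt11_general E₀ E V htotreal s hs θ hθ θ0 hθ0 hθ0neg hgen ι hιfix hιθ Φ hΦadd1 hΦsmul1 hΦadd2
    hΦsmul2 m hm u horth d hd σ₀ hreal hσ₀1 hσ₀neg hother B hB
end
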